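/- The 5-wheel precoloring gadget fails: the graph of Lemma 'no-3C5-2' — a 6-cycle with attached pentagon structure consisting of vertices forming three mutually adjacent-at-distance-2 vertices x, y, z around the edge structure shown — admits no proper 3-coloring of its exact square. Concretely: in any 3-coloring of the exact square of the depicted subcubic planar graph, the vertices y and z (two neighbors of x) would be forced to share x's color, a contradiction. -/

import Mathlib

/-- The exact square of a graph `G`: two distinct vertices are adjacent iff
their distance in `G` is exactly `2`. -/
def exactSquare {V : Type*} (G : SimpleGraph V) : SimpleGraph V where
  Adj u v := G.dist u v = 2
  symm := ⟨fun u v (h : G.dist u v = 2) => (show G.dist v u = 2 by rwa [SimpleGraph.dist_comm])⟩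
  loopless := ⟨fun v (h : G.dist v v = 2) => by simp [SimpleGraph.dist_self] at h⟩

/-- The subcubic planar graph of Figure 8 of the paper (Lemma `no-3C5-2`):
a hexagon `u₁u₂u₃u₄ z s` (vertices `0`–`5`, with `z = 4`, `s = 5`), together
with vertices `x = 6`, `y = 7`, `s' = 8`, `u = 9`, `s'' = 10`, `v = 11`,
`x' = 12`, `a = 13`, `b = 14`, `t = 15`, and the edges as depicted. -/
def figure8Graph : SimpleGraph (Fin 16) :=
  SimpleGraph.fromRel (fun u v => (u.val, v.val) ∈
    [(0,1), (1,2), (2,3), (3,4), (4,5), (5,0),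
     (4,6), (6,7), (7,8), (8,5),
     (8,9), (9,10), (10,11), (11,12), (12,7),
     (3,13), (13,14), (14,6), (14,15), (15,12)])

/-! Only three colours exist, so two vertices that both see (are at distance two from) both ends
of an edge of the exact square get the same colour. The hexagon vertices `0, 2, 4` form a triangle
of the exact square; `a = 13` sees `2, 4` and `s' = 8` sees `0, 4`, so they take the colours of `0`
and `2`, and `x = 6`, which sees `a` and `s'`, takes the colour of `z = 4`. Hence `x` and `y = 7`
(which sees `z`) have different colours. Then `s = 5` and `t = 15` share a colour (both see `x`
and `y`), as do `s` and `v = 11` (both see `y` and `u = 9`, which see each other); but `t` and `v`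
see each other through `x' = 12`. -/

section ExactSquare

variable {V : Type*} {G : SimpleGraph V} {u w v : V}

theorem SimpleGraph.dist_eq_two_of_adj_of_adj (huw : G.Adj u w) (hwv : G.Adj w v)
    (huv : ¬G.Adj u v) (hne : u ≠ v) : G.dist u v = 2 := by
  rw [SimpleGraph.dist, G.edist_eq_two_iff.mpr ⟨hne, huv, w, huw, hwv.symm⟩]
  rfl

theorem exactSquare_adj_of_adj_of_adj (huw : G.Adj u w) (hwv : G.Adj w v)
    (huv : ¬G.Adj u v) (hne : u ≠ v) : (exactSquare G).Adj u v :=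
  G.dist_eq_two_of_adj_of_adj huw hwv huv hne

end ExactSquare

theorem Fin.eq_of_ne_of_ne_of_ne_three {a b c d : Fin 3} (hcd : c ≠ d)
    (ha : a ≠ c ∧ a ≠ d) (hb : b ≠ c ∧ b ≠ d) : a = b := by
  revert a b c d
  decide

instance : DecidableRel figure8Graph.Adj := fun u v =>
  decidable_of_iff _ (SimpleGraph.fromRel_adj _ u v).symm

theorem figure8_coloring_ne_of_midpoint {α : Type*} (C : (exactSquare figure8Graph).Coloring α)
    (w : Fin 16) {u v : Fin 16}
    (h : figure8Graph.Adj u w ∧ figure8Graph.Adj w v ∧ ¬figure8Graph.Adj u v ∧ u ≠ v) :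
    C u ≠ C v :=
  C.valid (exactSquare_adj_of_adj_of_adj h.1 h.2.1 h.2.2.1 h.2.2.2)

theorem figure8_coloring_four_eq_six (C : (exactSquare figure8Graph).Coloring (Fin 3)) :
    C 4 = C 6 := by
  have h02 : C 0 ≠ C 2 := figure8_coloring_ne_of_midpoint C 1 (by decide)
  have h04 : C 0 ≠ C 4 := figure8_coloring_ne_of_midpoint C 5 (by decide)
  have h24 : C 2 ≠ C 4 := figure8_coloring_ne_of_midpoint C 3 (by decide)
  have h0_13 : C 0 = C 13 := Fin.eq_of_ne_of_ne_of_ne_three h24 ⟨h02, h04⟩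
    ⟨(figure8_coloring_ne_of_midpoint C 3 (by decide)).symm,
      (figure8_coloring_ne_of_midpoint C 3 (by decide)).symm⟩
  have h28 : C 2 = C 8 := Fin.eq_of_ne_of_ne_of_ne_three h04 ⟨h02.symm, h24⟩
    ⟨(figure8_coloring_ne_of_midpoint C 5 (by decide)).symm,
      (figure8_coloring_ne_of_midpoint C 5 (by decide)).symm⟩
  have h6_13 : C 6 ≠ C 13 := figure8_coloring_ne_of_midpoint C 14 (by decide)
  have h68 : C 6 ≠ C 8 := figure8_coloring_ne_of_midpoint C 7 (by decide)
  exact Fin.eq_of_ne_of_ne_of_ne_three h02 ⟨h04.symm, h24.symm⟩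
    ⟨h0_13 ▸ h6_13, h28 ▸ h68⟩

/-- The graph of Figure 8 admits no proper 3-coloring of its exact square. -/
theorem figure8_not_exactSquare_three_colorable :
    ¬ (exactSquare figure8Graph).Colorable 3 := by
  rintro ⟨C⟩
  have h46 := figure8_coloring_four_eq_six C
  have h67 : C 6 ≠ C 7 := h46 ▸ (figure8_coloring_ne_of_midpoint C 6 (by decide) : C 4 ≠ C 7)
  have h79 : C 7 ≠ C 9 := figure8_coloring_ne_of_midpoint C 8 (by decide)
  have h5_15 : C 5 = C 15 := Fin.eq_of_ne_of_ne_of_ne_three h67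
    ⟨figure8_coloring_ne_of_midpoint C 4 (by decide),
      figure8_coloring_ne_of_midpoint C 8 (by decide)⟩
    ⟨(figure8_coloring_ne_of_midpoint C 14 (by decide)).symm,
      (figure8_coloring_ne_of_midpoint C 12 (by decide)).symm⟩
  have h5_11 : C 5 = C 11 := Fin.eq_of_ne_of_ne_of_ne_three h79
    ⟨figure8_coloring_ne_of_midpoint C 8 (by decide),
      figure8_coloring_ne_of_midpoint C 8 (by decide)⟩
    ⟨(figure8_coloring_ne_of_midpoint C 12 (by decide)).symm,
      (figure8_coloring_ne_of_midpoint C 10 (by decide)).symm⟩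
  exact figure8_coloring_ne_of_midpoint C 12 (by decide) (h5_11 ▸ h5_15)
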